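/- Let m < n be integers, φ ∈ C(𝕋^d), and let γ be a minimizer for K_{m,n}φ at γ(n). Then for every integer j with m ≤ j ≤ n: (i) K_{m,j}φ(x) ≥ Ǩ_{j,n}(K_{m,n}φ)(x) for all x ∈ 𝕋^d, and (ii) K_{m,j}φ(γ(j)) = Ǩ_{j,n}(K_{m,n}φ)(γ(j)). (Here K_{m,m}φ = Ǩ_{n,n}φ = φ by convention.) -/

import Mathlib

open MeasureTheory

noncomputable section

/-- Euclidean space ℝ^d. -/
abbrev V (d : ℕ) := EuclideanSpace ℝ (Fin d)

/-- The torus 𝕋^d = ℝ^d/ℤ^d, as a product of circles, with its quotient distance. -/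
abbrev Torus (d : ℕ) := Fin d → AddCircle (1 : ℝ)

/-- The canonical projection ℝ^d → 𝕋^d. -/
def projT {d : ℕ} (x : V d) : Torus d := fun i => (x i : AddCircle (1 : ℝ))

/-- `ζ` is an absolutely continuous curve on `[s,t]` with (square-integrable)
derivative `g`. -/
def IsAC {d : ℕ} (ζ g : ℝ → V d) (s t : ℝ) : Prop :=
  IntegrableOn g (Set.Icc s t) ∧ IntegrableOn (fun τ => ‖g τ‖ ^ 2) (Set.Icc s t) ∧
    ∀ τ ∈ Set.Icc s t, ζ τ = ζ s + ∫ u in s..τ, g u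

/-- The action 𝔸(ζ) = ∫_s^t (½|ζ̇|² − b·ζ̇) dτ − Σ_{s ≤ j < t} F_j(ζ(j)) of the curve `ζ`
with derivative `g`, for the kicked potentials `F`. -/
def action {d : ℕ} (F : ℤ → Torus d → ℝ) (b : V d) (ζ g : ℝ → V d) (s t : ℝ) : ℝ :=
  (∫ τ in s..t, ((1 : ℝ) / 2 * ‖g τ‖ ^ 2 - (inner ℝ b (g τ) : ℝ))) -
    ∑ j ∈ Finset.Ico ⌈s⌉ ⌈t⌉, F j (projT (ζ (j : ℝ)))

/-- The action function A_{s,t}(x,x') = inf over absolutely continuous curves from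
`x` to `x'`. -/
def actFn {d : ℕ} (F : ℤ → Torus d → ℝ) (b : V d) (s t : ℝ) (x x' : Torus d) : ℝ :=
  sInf {a | ∃ ζ g : ℝ → V d, IsAC ζ g s t ∧ projT (ζ s) = x ∧ projT (ζ t) = x' ∧
    action F b ζ g s t = a}

/-- The backward Lax–Oleinik operator K_{s,t}φ(x) = min_y (φ(y) + A_{s,t}(y,x)), with
the convention K_{s,s}φ = φ. -/
def KOp {d : ℕ} (F : ℤ → Torus d → ℝ) (b : V d) (s t : ℝ) (φ : Torus d → ℝ) :
    Torus d → ℝ :=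
  if s < t then fun x => sInf {a | ∃ y : Torus d, a = φ y + actFn F b s t y x} else φ

/-- The forward Lax–Oleinik operator Ǩ_{s,t}φ(x) = max_y (φ(y) − A_{s,t}(x,y)), with
the convention Ǩ_{s,s}φ = φ. -/
def KChk {d : ℕ} (F : ℤ → Torus d → ℝ) (b : V d) (s t : ℝ) (φ : Torus d → ℝ) :
    Torus d → ℝ :=
  if s < t then fun x => sSup {a | ∃ y : Torus d, a = φ y - actFn F b s t x y} else φ

/-- The seminorm ‖ψ‖_* = min_C sup_x |ψ(x) − C|. -/
def starNorm {d : ℕ} (ψ : Torus d → ℝ) : ℝ := ⨅ C : ℝ, ⨆ x : Torus d, |ψ x - C|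

/-- A minimizer for `K_{m,n}φ` at its terminal point `ζ(n)`. -/
def IsMinimizer {d : ℕ} (F : ℤ → Torus d → ℝ) (b : V d) (m n : ℤ) (φ : Torus d → ℝ)
    (ζ g : ℝ → V d) : Prop :=
  IsAC ζ g m n ∧
    KOp F b m n φ (projT (ζ (n : ℝ))) = φ (projT (ζ (m : ℝ))) + action F b ζ g m n

/-- A curve attaining `Ǩ_{m,n}φ` at its initial point `ζ(m)`. -/
def IsMaximizer {d : ℕ} (F : ℤ → Torus d → ℝ) (b : V d) (m n : ℤ) (φ : Torus d → ℝ)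
    (ζ g : ℝ → V d) : Prop :=
  IsAC ζ g m n ∧
    KChk F b m n φ (projT (ζ (m : ℝ))) = φ (projT (ζ (n : ℝ))) - action F b ζ g m n

/-- A backward stationary solution. -/
def IsBackwardSol {d : ℕ} (F : ℤ → Torus d → ℝ) (b : V d) (ψ : Torus d → ℤ → ℝ) : Prop :=
  (∀ n : ℤ, Continuous fun x => ψ x n) ∧
    ∀ m n : ℤ, m < n → ∀ x, KOp F b m n (fun y => ψ y m) x = ψ x n

/-- A forward stationary solution. -/
def IsForwardSol {d : ℕ} (F : ℤ → Torus d → ℝ) (b : V d) (ψ : Torus d → ℤ → ℝ) : Prop :=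
  (∀ n : ℤ, Continuous fun x => ψ x n) ∧
    ∀ m n : ℤ, m < n → ∀ x, KChk F b m n (fun y => ψ y n) x = ψ x m

/-- `ζ` is affine on each interval `[j-1, j]` with (left) velocity `v j`. -/
def AffineOnUnit {d : ℕ} (ζ : ℝ → V d) (v : ℤ → V d) (m n : ℤ) : Prop :=
  ∀ j : ℤ, m < j → j ≤ n → ∀ τ ∈ Set.Icc ((j : ℝ) - 1) (j : ℝ),
    ζ τ = ζ (j : ℝ) + (τ - (j : ℝ)) • v j

/-! Concatenating curves makes the action function subadditive,
`A_{s,t}(x,z) ≤ A_{s,u}(x,y) + A_{u,t}(y,z)`, hence `K_{s,t}φ(z) ≤ K_{s,u}φ(y) + A_{u,t}(y,z)`;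
the supremum over `z` is (i). Along a minimizer `γ` this is an equality for `y = γ(u)`,
`z = γ(t)`: splitting the action of `γ` at `u`, the first piece bounds `K_{s,u}φ(γ(u))` and the
second bounds `A_{u,t}(γ(u), γ(t))`. -/

open Set

section Torus

variable {d : ℕ}

theorem isOpenQuotientMap_projT : IsOpenQuotientMap (projT : V d → Torus d) :=
  (IsOpenQuotientMap.piMap fun _ => QuotientAddGroup.isOpenQuotientMap_mk).comp
    (PiLp.homeomorph 2 _).isOpenQuotientMap

theorem projT_add_sub_of_projT_eq {a c : V d} (h : projT a = projT c) (w : V d) :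
    projT (w + (a - c)) = projT w := by
  funext i
  have hi : ((a i : ℝ) : AddCircle (1 : ℝ)) = c i := congrFun h i
  simp only [projT, PiLp.add_apply, PiLp.sub_apply, AddCircle.coe_add, AddCircle.coe_sub, hi,
    sub_self, add_zero]

end Torus

section Integrals

variable {E : Type*} [NormedAddCommGroup E]

theorem intervalIntegrable_of_integrableOn_Icc {f : ℝ → E} {s t a c : ℝ}
    (hf : IntegrableOn f (Icc s t)) (hsa : s ≤ a) (hac : a ≤ c) (hct : c ≤ t) :
    IntervalIntegrable f volume a c :=
  (hf.mono_set (by rw [uIcc_of_le hac]; exact Icc_subset_Icc hsa hct)).intervalIntegrable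

theorem integrableOn_Icc_ite_le {f₁ f₂ : ℝ → E} {s u t : ℝ}
    (h₁ : IntegrableOn f₁ (Icc s u)) (h₂ : IntegrableOn f₂ (Icc u t)) :
    IntegrableOn (fun τ => if τ ≤ u then f₁ τ else f₂ τ) (Icc s t) := by
  have hcover : Icc s t ⊆ Icc s u ∪ Ioc u t := fun τ hτ => by
    by_cases h : τ ≤ u
    exacts [Or.inl ⟨hτ.1, h⟩, Or.inr ⟨not_le.1 h, hτ.2⟩]
  refine IntegrableOn.mono_set ?_ hcover
  exact (h₁.congr_fun (fun τ hτ => (if_pos hτ.2).symm) measurableSet_Icc).union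
    ((h₂.mono_set Ioc_subset_Icc_self).congr_fun
      (fun τ hτ => (if_neg (not_le.2 hτ.1)).symm) measurableSet_Ioc)

theorem intervalIntegral_ite_le [NormedSpace ℝ E] {f₁ f₂ : ℝ → E} {s u t : ℝ} (hsu : s ≤ u) (hut : u ≤ t)
    (h₁ : IntervalIntegrable f₁ volume s u) (h₂ : IntervalIntegrable f₂ volume u t) :
    ∫ τ in s..t, (if τ ≤ u then f₁ τ else f₂ τ) = (∫ τ in s..u, f₁ τ) + ∫ τ in u..t, f₂ τ := by
  have e₁ : EqOn f₁ (fun τ => if τ ≤ u then f₁ τ else f₂ τ) (uIoc s u) := fun τ hτ => by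
    rw [uIoc_of_le hsu] at hτ
    exact (if_pos hτ.2).symm
  have e₂ : EqOn f₂ (fun τ => if τ ≤ u then f₁ τ else f₂ τ) (uIoc u t) := fun τ hτ => by
    rw [uIoc_of_le hut] at hτ
    exact (if_neg (not_le.2 hτ.1)).symm
  rw [← intervalIntegral.integral_add_adjacent_intervals (h₁.congr e₁) (h₂.congr e₂),
    intervalIntegral.integral_congr_ae (ae_of_all _ fun τ hτ => (e₁ hτ).symm),
    intervalIntegral.integral_congr_ae (ae_of_all _ fun τ hτ => (e₂ hτ).symm)]

end Integrals

theorem neg_half_norm_sq_le_half_norm_sq_sub_inner {E : Type*} [NormedAddCommGroup E]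
    [InnerProductSpace ℝ E] (b v : E) : -(‖b‖ ^ 2 / 2) ≤ 1 / 2 * ‖v‖ ^ 2 - inner ℝ b v := by
  nlinarith [real_inner_le_norm b v, sq_nonneg (‖b‖ - ‖v‖)]

section Curves

variable {d : ℕ} {ζ g ζ₁ g₁ ζ₂ g₂ : ℝ → V d} {s u t : ℝ}

theorem IsAC.mono (h : IsAC ζ g s t) {s' t' : ℝ} (hs : s ≤ s') (hst : s' ≤ t') (ht : t' ≤ t) :
    IsAC ζ g s' t' := by
  have hsub : Icc s' t' ⊆ Icc s t := Icc_subset_Icc hs ht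
  refine ⟨h.1.mono_set hsub, h.2.1.mono_set hsub, fun τ hτ => ?_⟩
  rw [h.2.2 τ (hsub hτ), h.2.2 s' ⟨hs, hst.trans ht⟩, add_assoc,
    intervalIntegral.integral_add_adjacent_intervals
      (intervalIntegrable_of_integrableOn_Icc h.1 le_rfl hs (hst.trans ht))
      (intervalIntegrable_of_integrableOn_Icc h.1 hs hτ.1 (hτ.2.trans ht))]

theorem IsAC.intervalIntegrable (h : IsAC ζ g s t) {a c : ℝ} (hsa : s ≤ a) (hac : a ≤ c)
    (hct : c ≤ t) : IntervalIntegrable g volume a c :=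
  intervalIntegrable_of_integrableOn_Icc h.1 hsa hac hct

theorem IsAC.integrableOn_lagrangian (h : IsAC ζ g s t) (b : V d) :
    IntegrableOn (fun τ => 1 / 2 * ‖g τ‖ ^ 2 - inner ℝ b (g τ)) (Icc s t) :=
  (h.2.1.const_mul _).sub (h.1.const_inner b)

theorem exists_isAC_projT_eq (hst : s < t) (x y : Torus d) :
    ∃ ζ g : ℝ → V d, IsAC ζ g s t ∧ projT (ζ s) = x ∧ projT (ζ t) = y := by
  obtain ⟨p, rfl⟩ := isOpenQuotientMap_projT.surjective x
  obtain ⟨q, rfl⟩ := isOpenQuotientMap_projT.surjective y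
  set v : V d := (t - s)⁻¹ • (q - p)
  have hv : (t - s) • v = q - p := by
    rw [smul_smul, mul_inv_cancel₀ (sub_ne_zero.2 hst.ne'), one_smul]
  refine ⟨fun τ => p + (τ - s) • v, fun _ => v, ⟨integrableOn_const measure_Icc_lt_top.ne,
    integrableOn_const measure_Icc_lt_top.ne, fun τ _ => by simp⟩, by simp, ?_⟩
  simp only [hv, add_sub_cancel]

/-- The translation keeps the glued curve continuous in `ℝ^d`, as `IsAC` demands; it is invisible
on the torus when `projT (ζ₁ u) = projT (ζ₂ u)`. -/
def concatCurve {d : ℕ} (u : ℝ) (ζ₁ ζ₂ : ℝ → V d) : ℝ → V d :=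
  fun τ => if τ ≤ u then ζ₁ τ else ζ₂ τ + (ζ₁ u - ζ₂ u)

theorem projT_concatCurve_of_le (hmatch : projT (ζ₁ u) = projT (ζ₂ u)) {τ : ℝ} (hτ : u ≤ τ) :
    projT (concatCurve u ζ₁ ζ₂ τ) = projT (ζ₂ τ) := by
  rcases hτ.eq_or_lt with rfl | hlt
  · rw [concatCurve, if_pos le_rfl, hmatch]
  · rw [concatCurve, if_neg (not_le.2 hlt), projT_add_sub_of_projT_eq hmatch]

theorem IsAC.concat (h₁ : IsAC ζ₁ g₁ s u) (h₂ : IsAC ζ₂ g₂ u t) (hsu : s ≤ u) :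
    IsAC (concatCurve u ζ₁ ζ₂) (fun τ => if τ ≤ u then g₁ τ else g₂ τ) s t := by
  refine ⟨integrableOn_Icc_ite_le h₁.1 h₂.1, ?_, fun τ hτ => ?_⟩
  · simpa only [apply_ite (fun v : V d => ‖v‖ ^ 2)] using integrableOn_Icc_ite_le h₁.2.1 h₂.2.1
  rw [show concatCurve u ζ₁ ζ₂ s = ζ₁ s from if_pos hsu]
  by_cases hτu : τ ≤ u
  · rw [concatCurve, if_pos hτu, h₁.2.2 τ ⟨hτ.1, hτu⟩]
    congr 1
    refine intervalIntegral.integral_congr fun x hx => (if_pos ?_).symm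
    exact ((uIcc_of_le hτ.1 ▸ hx).2).trans hτu
  · have hτu : u < τ := not_le.1 hτu
    rw [concatCurve, if_neg hτu.not_ge,
      intervalIntegral_ite_le hsu hτu.le (h₁.intervalIntegrable le_rfl hsu le_rfl)
        (h₂.intervalIntegrable le_rfl hτu.le hτ.2),
      h₂.2.2 τ ⟨hτu.le, hτ.2⟩, h₁.2.2 u ⟨hsu, le_rfl⟩]
    abel

end Curves

section Action

variable {d : ℕ} {F : ℤ → Torus d → ℝ} {b : V d} {ζ g ζ' g' ζ₁ g₁ ζ₂ g₂ : ℝ → V d} {s u t : ℝ}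

@[simp]
theorem action_self : action F b ζ g s s = 0 := by
  simp [action]

theorem action_congr (hst : s ≤ t) (hg : EqOn g g' (Ioc s t))
    (hζ : ∀ i : ℤ, s ≤ i → (i : ℝ) < t → projT (ζ i) = projT (ζ' i)) :
    action F b ζ g s t = action F b ζ' g' s t := by
  unfold action
  congr 1
  · refine intervalIntegral.integral_congr_ae (ae_of_all _ fun τ hτ => ?_)
    rw [hg (uIoc_of_le hst ▸ hτ)]
  · refine Finset.sum_congr rfl fun i hi => ?_
    rw [Finset.mem_Ico, Int.ceil_le, Int.lt_ceil] at hi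
    rw [hζ i hi.1 hi.2]

theorem action_add (h : IsAC ζ g s t) (hsu : s ≤ u) (hut : u ≤ t) :
    action F b ζ g s u + action F b ζ g u t = action F b ζ g s t := by
  have hint := intervalIntegral.integral_add_adjacent_intervals
    (intervalIntegrable_of_integrableOn_Icc (h.integrableOn_lagrangian b) le_rfl hsu hut)
    (intervalIntegrable_of_integrableOn_Icc (h.integrableOn_lagrangian b) hsu hut le_rfl)
  have hsum : ∑ i ∈ Finset.Ico ⌈s⌉ ⌈u⌉, F i (projT (ζ i)) +
      ∑ i ∈ Finset.Ico ⌈u⌉ ⌈t⌉, F i (projT (ζ i)) = ∑ i ∈ Finset.Ico ⌈s⌉ ⌈t⌉, F i (projT (ζ i)) := by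
    rw [← Finset.sum_union (Finset.Ico_disjoint_Ico_consecutive _ _ _),
      Finset.Ico_union_Ico_eq_Ico (Int.ceil_mono hsu) (Int.ceil_mono hut)]
  unfold action
  rw [← hint, ← hsum]
  ring

theorem action_concatCurve (h₁ : IsAC ζ₁ g₁ s u) (h₂ : IsAC ζ₂ g₂ u t) (hsu : s ≤ u)
    (hut : u ≤ t) (hmatch : projT (ζ₁ u) = projT (ζ₂ u)) :
    action F b (concatCurve u ζ₁ ζ₂) (fun τ => if τ ≤ u then g₁ τ else g₂ τ) s t =
      action F b ζ₁ g₁ s u + action F b ζ₂ g₂ u t := by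
  rw [← action_add (h₁.concat h₂ hsu) hsu hut]
  congr 1
  · refine action_congr hsu (fun τ hτ => if_pos hτ.2) fun i _ hi => ?_
    rw [concatCurve, if_pos hi.le]
  · exact action_congr hut (fun τ hτ => if_neg (not_le.2 hτ.1)) fun i hi _ =>
      projT_concatCurve_of_le hmatch hi

theorem exists_forall_le_action (hF : ∀ j, BddAbove (range (F j))) (b : V d) (hst : s ≤ t) :
    ∃ L, ∀ ζ g : ℝ → V d, IsAC ζ g s t → L ≤ action F b ζ g s t := by
  choose C hC using hF
  refine ⟨(t - s) * -(‖b‖ ^ 2 / 2) - ∑ j ∈ Finset.Ico ⌈s⌉ ⌈t⌉, C j, fun ζ g h => ?_⟩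
  have hint : (t - s) * -(‖b‖ ^ 2 / 2) ≤
      ∫ τ in s..t, (1 / 2 * ‖g τ‖ ^ 2 - inner ℝ b (g τ)) := by
    simpa [mul_div_assoc] using intervalIntegral.integral_mono_on hst intervalIntegrable_const
      (intervalIntegrable_of_integrableOn_Icc (h.integrableOn_lagrangian b) le_rfl hst le_rfl)
      fun τ _ => neg_half_norm_sq_le_half_norm_sq_sub_inner b (g τ)
  have hsum : ∑ j ∈ Finset.Ico ⌈s⌉ ⌈t⌉, F j (projT (ζ j)) ≤ ∑ j ∈ Finset.Ico ⌈s⌉ ⌈t⌉, C j :=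
    Finset.sum_le_sum fun j _ => hC j ⟨_, rfl⟩
  unfold action
  linarith

end Action

section ActionFunction

variable {d : ℕ} {F : ℤ → Torus d → ℝ} {b : V d} {ζ g : ℝ → V d} {s u t : ℝ}

theorem actFn_le_action (hF : ∀ j, BddAbove (range (F j))) (hst : s ≤ t) (h : IsAC ζ g s t) :
    actFn F b s t (projT (ζ s)) (projT (ζ t)) ≤ action F b ζ g s t := by
  obtain ⟨L, hL⟩ := exists_forall_le_action hF b hst
  exact csInf_le ⟨L, by rintro _ ⟨ζ', g', h', -, -, rfl⟩; exact hL ζ' g' h'⟩ ⟨ζ, g, h, rfl, rfl, rfl⟩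

theorem exists_forall_le_actFn (hF : ∀ j, BddAbove (range (F j))) (b : V d) (hst : s < t) :
    ∃ L, ∀ x y, L ≤ actFn F b s t x y := by
  obtain ⟨L, hL⟩ := exists_forall_le_action hF b hst.le
  refine ⟨L, fun x y => le_csInf ?_ ?_⟩
  · obtain ⟨ζ, g, h, hx, hy⟩ := exists_isAC_projT_eq hst x y
    exact ⟨_, ζ, g, h, hx, hy, rfl⟩
  · rintro _ ⟨ζ, g, h, -, -, rfl⟩
    exact hL ζ g h

theorem exists_action_lt_of_actFn_lt (hst : s < t) {x y : Torus d} {c : ℝ}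
    (hc : actFn F b s t x y < c) :
    ∃ ζ g : ℝ → V d, IsAC ζ g s t ∧ projT (ζ s) = x ∧ projT (ζ t) = y ∧
      action F b ζ g s t < c := by
  obtain ⟨ζ, g, h, hx, hy⟩ := exists_isAC_projT_eq hst x y
  obtain ⟨_, ⟨ζ', g', h', hx', hy', rfl⟩, hlt⟩ := exists_lt_of_csInf_lt (by exact ⟨_, ζ, g, h, hx, hy, rfl⟩) hc
  exact ⟨ζ', g', h', hx', hy', hlt⟩

theorem actFn_le_actFn_add_actFn (hF : ∀ j, BddAbove (range (F j))) (hsu : s < u) (hut : u < t)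
    (x y z : Torus d) : actFn F b s t x z ≤ actFn F b s u x y + actFn F b u t y z := by
  refine le_of_forall_pos_lt_add fun ε hε => ?_
  obtain ⟨ζ₁, g₁, h₁, rfl, hy₁, hlt₁⟩ :=
    exists_action_lt_of_actFn_lt hsu (lt_add_of_pos_right (actFn F b s u x y) (half_pos hε))
  obtain ⟨ζ₂, g₂, h₂, hy₂, rfl, hlt₂⟩ :=
    exists_action_lt_of_actFn_lt hut (lt_add_of_pos_right (actFn F b u t y z) (half_pos hε))
  have hmatch : projT (ζ₁ u) = projT (ζ₂ u) := hy₁.trans hy₂.symm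
  have hconcat := actFn_le_action (b := b) hF (hsu.trans hut).le (h₁.concat h₂ hsu.le)
  rw [action_concatCurve h₁ h₂ hsu.le hut.le hmatch, projT_concatCurve_of_le hmatch hut.le,
    show concatCurve u ζ₁ ζ₂ s = ζ₁ s from if_pos hsu.le] at hconcat
  linarith

end ActionFunction

section LaxOleinik

variable {d : ℕ} {F : ℤ → Torus d → ℝ} {b : V d} {φ : Torus d → ℝ} {ζ g : ℝ → V d} {s u t : ℝ}

theorem KOp_of_lt (hst : s < t) (x : Torus d) :
    KOp F b s t φ x = sInf {a | ∃ y, a = φ y + actFn F b s t y x} := by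
  rw [KOp, if_pos hst]

theorem KChk_of_lt (hst : s < t) (x : Torus d) :
    KChk F b s t φ x = sSup {a | ∃ y, a = φ y - actFn F b s t x y} := by
  rw [KChk, if_pos hst]

@[simp]
theorem KOp_self : KOp F b s s φ = φ :=
  if_neg (lt_irrefl s)

@[simp]
theorem KChk_self : KChk F b s s φ = φ :=
  if_neg (lt_irrefl s)

variable (hF : ∀ j, BddAbove (range (F j))) (hφ : BddBelow (range φ))
include hF hφ

theorem KOp_le_add_actFn (hst : s < t) (x y : Torus d) :
    KOp F b s t φ x ≤ φ y + actFn F b s t y x := by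
  obtain ⟨L, hL⟩ := exists_forall_le_actFn hF b hst
  obtain ⟨M, hM⟩ := hφ
  rw [KOp_of_lt hst]
  refine csInf_le ⟨M + L, ?_⟩ ⟨y, rfl⟩
  rintro _ ⟨z, rfl⟩
  exact add_le_add (hM ⟨z, rfl⟩) (hL z x)

theorem KOp_le_add_action (hst : s ≤ t) (h : IsAC ζ g s t) :
    KOp F b s t φ (projT (ζ t)) ≤ φ (projT (ζ s)) + action F b ζ g s t := by
  rcases hst.eq_or_lt with rfl | hlt
  · simp
  · exact (KOp_le_add_actFn hF hφ hlt _ _).trans (add_le_add le_rfl (actFn_le_action hF hlt.le h))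

theorem KOp_le_KOp_add_actFn (hsu : s ≤ u) (hut : u < t) (y z : Torus d) :
    KOp F b s t φ z ≤ KOp F b s u φ y + actFn F b u t y z := by
  rcases hsu.eq_or_lt with rfl | hsu
  · rw [KOp_self]
    exact KOp_le_add_actFn hF hφ hut z y
  refine le_of_forall_pos_lt_add fun ε hε => ?_
  have hlt : sInf {a | ∃ x, a = φ x + actFn F b s u x y} < KOp F b s u φ y + ε := by
    rw [← KOp_of_lt hsu]
    linarith
  obtain ⟨_, ⟨x, rfl⟩, hx⟩ := exists_lt_of_csInf_lt (by exact ⟨_, y, rfl⟩) hlt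
  calc KOp F b s t φ z ≤ φ x + actFn F b s t x z := KOp_le_add_actFn hF hφ (hsu.trans hut) z x
    _ ≤ φ x + (actFn F b s u x y + actFn F b u t y z) :=
      add_le_add le_rfl (actFn_le_actFn_add_actFn hF hsu hut x y z)
    _ < KOp F b s u φ y + actFn F b u t y z + ε := by linarith

theorem KChk_KOp_le_KOp (hsu : s ≤ u) (hut : u ≤ t) (x : Torus d) :
    KChk F b u t (KOp F b s t φ) x ≤ KOp F b s u φ x := by
  rcases hut.eq_or_lt with rfl | hut
  · rw [KChk_self]
  rw [KChk_of_lt hut]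
  refine csSup_le ⟨_, x, rfl⟩ ?_
  rintro _ ⟨y, rfl⟩
  linarith [KOp_le_KOp_add_actFn (b := b) hF hφ hsu hut x y]

theorem KOp_le_KChk_KOp_of_minimizer (h : IsAC ζ g s t)
    (hmin : KOp F b s t φ (projT (ζ t)) = φ (projT (ζ s)) + action F b ζ g s t)
    (hsu : s ≤ u) (hut : u ≤ t) :
    KOp F b s u φ (projT (ζ u)) ≤ KChk F b u t (KOp F b s t φ) (projT (ζ u)) := by
  rcases hut.eq_or_lt with rfl | hut
  · rw [KChk_self]
  rw [KChk_of_lt hut]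
  refine le_csSup_of_le ⟨KOp F b s u φ (projT (ζ u)), ?_⟩ ⟨projT (ζ t), rfl⟩ ?_
  · rintro _ ⟨y, rfl⟩
    linarith [KOp_le_KOp_add_actFn (b := b) hF hφ hsu hut (projT (ζ u)) y]
  · have hleft := KOp_le_add_action (b := b) hF hφ hsu (h.mono le_rfl hsu hut.le)
    have hright := actFn_le_action (b := b) hF hut.le (h.mono hsu hut.le le_rfl)
    have hsplit := action_add (F := F) (b := b) h hsu hut.le
    linarith

end LaxOleinik

theorem statement5_general {d : ℕ} (F : ℤ → Torus d → ℝ)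
    (hF : ∀ j : ℤ, ContDiff ℝ 2 fun x : V d => F j (projT x)) (b : V d)
    (m n : ℤ) (φ : Torus d → ℝ) (hφ : Continuous φ)
    (ζ g : ℝ → V d) (hmin : IsMinimizer F b m n φ ζ g) :
    ∀ j : ℤ, m ≤ j → j ≤ n →
      (∀ x : Torus d, KChk F b j n (KOp F b m n φ) x ≤ KOp F b m j φ x) ∧
      KOp F b m j φ (projT (ζ (j : ℝ))) =
        KChk F b j n (KOp F b m n φ) (projT (ζ (j : ℝ))) := by
  have hFb : ∀ j, BddAbove (range (F j)) := fun j =>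
    (isCompact_range (isOpenQuotientMap_projT.continuous_comp_iff.1 (hF j).continuous)).bddAbove
  have hφb : BddBelow (range φ) := (isCompact_range hφ).bddBelow
  intro j hmj hjn
  have hmj' : (m : ℝ) ≤ j := by exact_mod_cast hmj
  have hjn' : (j : ℝ) ≤ n := by exact_mod_cast hjn
  exact ⟨KChk_KOp_le_KOp hFb hφb hmj' hjn',
    (KOp_le_KChk_KOp_of_minimizer hFb hφb hmin.1 hmin.2 hmj' hjn').antisymm
      (KChk_KOp_le_KOp hFb hφb hmj' hjn' _)⟩

theorem statement5 {d : ℕ} (F : ℤ → Torus d → ℝ)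
    (hF : ∀ j : ℤ, ContDiff ℝ 2 fun x : V d => F j (projT x)) (b : V d)
    (m n : ℤ) (hmn : m < n) (φ : Torus d → ℝ) (hφ : Continuous φ)
    (ζ g : ℝ → V d) (hmin : IsMinimizer F b m n φ ζ g) :
    ∀ j : ℤ, m ≤ j → j ≤ n →
      (∀ x : Torus d, KChk F b j n (KOp F b m n φ) x ≤ KOp F b m j φ x) ∧
      KOp F b m j φ (projT (ζ (j : ℝ))) =
        KChk F b j n (KOp F b m n φ) (projT (ζ (j : ℝ))) :=
  statement5_general F hF b m n φ hφ ζ g hmin
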